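/- (Triangular moment system for degree-N polynomials is invertible) For N : ℕ and T > 0, the (N+1)×(N+1) matrix M with entries M_{α,ν} = T^{α+ν+1}/((α+ν+1)·ν!) (arising from m_α = ∫₀ᵀ t^α · t^ν/ν! dt) has nonzero determinant. -/

import Mathlib

/-!
Up to the diagonal rescaling by `1 / ν!`, `M` is the Gram matrix `(∫₀ᵀ t^α t^ν dt)` of the
monomials in `L²(0, T)`. A vector `v` in its kernel gives a polynomial `p = ∑ v_ν X^ν` with
`∫₀ᵀ p² = vᵀ G v = 0`, so `p` vanishes on `(0, T)`, hence `p = 0` and `v = 0`.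
-/

open MeasureTheory Polynomial Matrix

theorem Polynomial.eq_zero_of_intervalIntegral_eval_sq_eq_zero {a b : ℝ} (hab : a < b)
    {p : ℝ[X]} (h : ∫ x in a..b, p.eval x ^ 2 = 0) : p = 0 := by
  have hcont : Continuous fun x => p.eval x ^ 2 := p.continuous.pow 2
  have hae : (fun x => p.eval x ^ 2) =ᵐ[volume.restrict (Set.Ioc a b)] 0 :=
    (intervalIntegral.integral_eq_zero_iff_of_le_of_nonneg_ae hab.le
      (.of_forall fun x => sq_nonneg _) (hcont.intervalIntegrable a b)).1 h
  have hvanish : Set.EqOn (fun x => p.eval x ^ 2) 0 (Set.Ioo a b) :=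
    Measure.eqOn_open_of_ae_eq (ae_restrict_of_ae_restrict_of_subset Set.Ioo_subset_Ioc_self hae)
      isOpen_Ioo hcont.continuousOn continuousOn_const
  refine p.eq_zero_of_infinite_isRoot ((Set.Ioo_infinite hab).mono fun x hx => ?_)
  exact pow_eq_zero_iff two_ne_zero |>.1 (hvanish hx)

theorem Polynomial.coeff_sum_C_mul_X_pow {R ι : Type*} [Semiring R] [Fintype ι] {e : ι → ℕ}
    (he : Function.Injective e) (v : ι → R) (j : ι) :
    (∑ i, C (v i) * X ^ e i).coeff (e j) = v j := by
  simp only [finsetSum_coeff, coeff_C_mul_X_pow]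
  rw [Finset.sum_eq_single j (fun i _ hij => if_neg (he.ne hij.symm)) (by simp), if_pos rfl]

noncomputable def monomialGramMatrix {ι : Type*} (e : ι → ℕ) (a b : ℝ) : Matrix ι ι ℝ :=
  Matrix.of fun i j => ∫ x in a..b, x ^ (e i + e j)

theorem dotProduct_monomialGramMatrix_mulVec {ι : Type*} [Fintype ι] (e : ι → ℕ) (a b : ℝ)
    (v w : ι → ℝ) :
    v ⬝ᵥ (monomialGramMatrix e a b *ᵥ w) =
      ∫ x in a..b, (∑ i, v i * x ^ e i) * ∑ j, w j * x ^ e j := by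
  calc v ⬝ᵥ (monomialGramMatrix e a b *ᵥ w)
      = ∑ i, ∑ j, ∫ x in a..b, v i * w j * x ^ (e i + e j) := by
        simp only [dotProduct, mulVec, monomialGramMatrix, of_apply, Finset.mul_sum,
          intervalIntegral.integral_const_mul]
        exact Finset.sum_congr rfl fun i _ => Finset.sum_congr rfl fun j _ => by ring
    _ = ∫ x in a..b, ∑ i, ∑ j, v i * w j * x ^ (e i + e j) := by
        rw [intervalIntegral.integral_finsetSum]
        · refine Finset.sum_congr rfl fun i _ => (intervalIntegral.integral_finsetSum ?_).symm
          exact fun j _ => (by fun_prop : Continuous _).intervalIntegrable a b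
        · exact fun i _ => (by fun_prop : Continuous _).intervalIntegrable a b
    _ = _ := by
        simp only [Finset.sum_mul_sum, pow_add]
        congr 1 with x
        exact Finset.sum_congr rfl fun i _ => Finset.sum_congr rfl fun j _ => by ring

theorem det_monomialGramMatrix_ne_zero {ι : Type*} [Fintype ι] [DecidableEq ι] {e : ι → ℕ}
    (he : Function.Injective e) {a b : ℝ} (hab : a < b) :
    (monomialGramMatrix e a b).det ≠ 0 := by
  rw [Ne, ← exists_mulVec_eq_zero_iff]
  rintro ⟨v, hv, hGv⟩
  have hp : (∑ i, C (v i) * X ^ e i : ℝ[X]) = 0 := by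
    refine eq_zero_of_intervalIntegral_eval_sq_eq_zero hab ?_
    simp_rw [eval_finsetSum, eval_mul, eval_C, eval_pow, eval_X, sq,
      ← dotProduct_monomialGramMatrix_mulVec, hGv, dotProduct_zero]
  exact hv <| funext fun j => by
    rw [Pi.zero_apply, ← coeff_sum_C_mul_X_pow he v j, hp, coeff_zero]

theorem stmt17 (N : ℕ) (T : ℝ) (hT : 0 < T)
    (M : Matrix (Fin (N + 1)) (Fin (N + 1)) ℝ)
    (hM : ∀ α ν : Fin (N + 1),
      M α ν = T ^ ((α : ℕ) + (ν : ℕ) + 1) /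
        (((α : ℕ) + (ν : ℕ) + 1 : ℕ) * (Nat.factorial (ν : ℕ) : ℝ))) :
    M.det ≠ 0 := by
  have hfactor : M = monomialGramMatrix Fin.val 0 T *
      diagonal fun ν : Fin (N + 1) => ((ν : ℕ).factorial : ℝ)⁻¹ := by
    ext α ν
    rw [hM, mul_diagonal, monomialGramMatrix, of_apply, integral_pow,
      zero_pow (Nat.succ_ne_zero _), sub_zero]
    push_cast
    field_simp
  rw [hfactor, det_mul, det_diagonal]
  exact mul_ne_zero (det_monomialGramMatrix_ne_zero Fin.val_injective hT) <|
    Finset.prod_ne_zero_iff.2 fun ν _ => inv_ne_zero (Nat.cast_ne_zero.2 (Nat.factorial_ne_zero _))
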